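/- Let W : ℝᴺ → ℝ be smooth with e^{-βW} integrable, let G : ℝᴺ → ℝ^{N×N} be smooth, and suppose that the antisymmetric part G^A = (G - Gᵀ)/2 is divergence-free in the sense that ∑ⱼ ∂ⱼ G^A ᵢⱼ(x) = 0 for all i and x. Then ρ(x) = e^{-βW(x)} satisfies the stationary Fokker–Planck equation ∇·( -G(x)∇W(x) ρ(x) - (2β)⁻¹ (G(x)+G(x)ᵀ) ∇ρ(x) ) = 0. -/

import Mathlib

open Matrix

/-- The partial derivative `∂ⱼ f (x)` on `ℝᴺ`. -/
noncomputable def pderiv' {N : ℕ} (j : Fin N) (f : (Fin N → ℝ) → ℝ) (x : Fin N → ℝ) : ℝ :=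
  fderiv ℝ f x (Pi.single j 1)

lemma contDiff_pderiv' {N : ℕ} {f : (Fin N → ℝ) → ℝ} (hf : ContDiff ℝ (⊤ : ℕ∞) f) (j : Fin N) :
    ContDiff ℝ (⊤ : ℕ∞) (fun y => pderiv' j f y) := by
  have h : ContDiff ℝ (⊤ : ℕ∞) (fderiv ℝ f) := hf.fderiv_right (by simp)
  exact ((ContinuousLinearMap.apply ℝ ℝ (Pi.single j 1 : Fin N → ℝ)).contDiff).comp h

lemma pderiv'_mul {N : ℕ} {a b : (Fin N → ℝ) → ℝ} {x : Fin N → ℝ} (i : Fin N)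
    (ha : DifferentiableAt ℝ a x) (hb : DifferentiableAt ℝ b x) :
    pderiv' i (fun y => a y * b y) x = pderiv' i a x * b x + a x * pderiv' i b x := by
  unfold pderiv'
  rw [fderiv_fun_mul ha hb]
  simp
  ring

lemma pderiv'_sum {N n : ℕ} {g : Fin n → (Fin N → ℝ) → ℝ} {x : Fin N → ℝ} (i : Fin N)
    (hg : ∀ j, DifferentiableAt ℝ (g j) x) :
    pderiv' i (fun y => ∑ j, g j y) x = ∑ j, pderiv' i (g j) x := by
  unfold pderiv'
  rw [fderiv_fun_sum (fun j _ => hg j)]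
  simp

lemma pderiv'_exp {N : ℕ} {β : ℝ} {W : (Fin N → ℝ) → ℝ} (hW : ContDiff ℝ (⊤ : ℕ∞) W)
    (j : Fin N) (y : Fin N → ℝ) :
    pderiv' j (fun z => Real.exp (-β * W z)) y
      = -β * pderiv' j W y * Real.exp (-β * W y) := by
  have h1 : HasFDerivAt (fun z => -β * W z) ((-β) • fderiv ℝ W y) y :=
    ((hW.differentiable (by simp) y).hasFDerivAt).const_mul (-β)
  have h2 := h1.exp
  unfold pderiv'
  rw [h2.fderiv]
  simp [mul_comm, mul_left_comm]

lemma pderiv'_symm {N : ℕ} {f : (Fin N → ℝ) → ℝ} (hf : ContDiff ℝ (⊤ : ℕ∞) f) (i j : Fin N)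
    (x : Fin N → ℝ) :
    pderiv' i (fun y => pderiv' j f y) x = pderiv' j (fun y => pderiv' i f y) x := by
  have hd : Differentiable ℝ (fderiv ℝ f) := (hf.fderiv_right (m := (⊤ : ℕ∞)) (by simp)).differentiable (by simp)
  have key : ∀ u v : Fin N, pderiv' u (fun y => pderiv' v f y) x
      = fderiv ℝ (fderiv ℝ f) x (Pi.single u 1) (Pi.single v 1) := by
    intro u v
    unfold pderiv'
    rw [fderiv_clm_apply (hd x) (differentiableAt_const _)]
    simp
  rw [key i j, key j i]
  exact (hf.contDiffAt.isSymmSndFDerivAt (by rw [minSmoothness_of_isRCLikeNormedField]; exact WithTop.coe_le_coe.mpr (le_top : (2 : ℕ∞) ≤ ⊤))) _ _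

lemma sum_antisymm {N : ℕ} {f : Fin N → Fin N → ℝ} (h : ∀ i j, f j i = -f i j) :
    ∑ i, ∑ j, f i j = 0 := by
  have h2 : ∑ i, ∑ j, f i j = -∑ i, ∑ j, f i j := by
    calc (∑ i, ∑ j, f i j) = ∑ j, ∑ i, f i j := Finset.sum_comm
      _ = ∑ j, ∑ i, -(f j i) :=
          Finset.sum_congr rfl fun j _ => Finset.sum_congr rfl fun i _ => h j i
      _ = -∑ j, ∑ i, f j i := by simp [Finset.sum_neg_distrib]
      _ = -∑ i, ∑ j, f i j := rfl
  linarith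

/-- if `W : ℝᴺ → ℝ` is smooth with `e^{-βW}` integrable, `G : ℝᴺ → ℝ^{N×N}` is
smooth, and the antisymmetric part `G^A = (G - Gᵀ)/2` is divergence-free
(`∑ⱼ ∂ⱼ G^Aᵢⱼ = 0`), then `ρ = e^{-βW}` satisfies the stationary Fokker–Planck equation
`∇·(-G ∇W ρ - (2β)⁻¹ (G + Gᵀ) ∇ρ) = 0`. -/
theorem gibbs_stationary_fokker_planck
    (N : ℕ) (β : ℝ) (hβ : 0 < β)
    (W : (Fin N → ℝ) → ℝ) (hW : ContDiff ℝ (⊤ : ℕ∞) W)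
    (hint : MeasureTheory.Integrable (fun x => Real.exp (-β * W x)))
    (G : (Fin N → ℝ) → Matrix (Fin N) (Fin N) ℝ)
    (hG : ∀ i j, ContDiff ℝ (⊤ : ℕ∞) (fun x => G x i j))
    (hdiv : ∀ i x, ∑ j, pderiv' j (fun y => ((G y - (G y)ᵀ) i j) / 2) x = 0) :
    ∀ x, ∑ i, pderiv' i
        (fun y => (-(G y).mulVec (fun j => pderiv' j W y)) i * Real.exp (-β * W y)
          - (1 / (2 * β)) * ((G y + (G y)ᵀ).mulVec
              (fun j => pderiv' j (fun z => Real.exp (-β * W z)) y)) i) x = 0 := by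
  intro x
  have hβ' : (β : ℝ) ≠ 0 := ne_of_gt hβ
  have hρc : ContDiff ℝ (⊤ : ℕ∞) (fun y => Real.exp (-β * W y)) :=
    Real.contDiff_exp.comp (contDiff_const.mul hW)
  have hwc : ∀ j : Fin N, ContDiff ℝ (⊤ : ℕ∞) (fun y => pderiv' j W y) := fun j => contDiff_pderiv' hW j
  have hfun : ∀ i j : Fin N,
      (fun y => ((G y)ᵀ - G y) i j / 2) = (fun y => ((G y - (G y)ᵀ) j i) / 2) := by
    intro i j; funext y
    simp [Matrix.sub_apply]
  have hBc : ∀ i j : Fin N, ContDiff ℝ (⊤ : ℕ∞) (fun y => ((G y)ᵀ - G y) i j / 2) := by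
    intro i j
    rw [hfun i j]
    have : (fun y => ((G y - (G y)ᵀ) j i) / 2) = fun y => (G y j i - G y i j) / 2 := by
      funext y; simp [Matrix.sub_apply]
    rw [this]
    exact ((hG j i).sub (hG i j)).div_const 2
  have hBd : ∀ i j : Fin N, DifferentiableAt ℝ (fun y => ((G y)ᵀ - G y) i j / 2) x :=
    fun i j => ((hBc i j).differentiable (by simp)) x
  have hwd : ∀ j : Fin N, DifferentiableAt ℝ (fun y => pderiv' j W y) x :=
    fun j => ((hwc j).differentiable (by simp)) x
  have hρd : DifferentiableAt ℝ (fun y => Real.exp (-β * W y)) x :=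
    (hρc.differentiable (by simp)) x
  -- Step 1: rewrite the flux as  ∑ j, B i j * ∂ⱼW * ρ  with B = (Gᵀ - G)/2
  have key : ∀ i : Fin N,
      (fun y => (-(G y).mulVec (fun j => pderiv' j W y)) i * Real.exp (-β * W y)
          - (1 / (2 * β)) * ((G y + (G y)ᵀ).mulVec
              (fun j => pderiv' j (fun z => Real.exp (-β * W z)) y)) i)
      = fun y => ∑ j, ((G y)ᵀ - G y) i j / 2 * pderiv' j W y * Real.exp (-β * W y) := by
    intro i; funext y
    have hρ : ∀ j, pderiv' j (fun z => Real.exp (-β * W z)) y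
        = -β * pderiv' j W y * Real.exp (-β * W y) := fun j => pderiv'_exp hW j y
    simp only [Matrix.mulVec, dotProduct, Pi.neg_apply, Matrix.add_apply,
      Matrix.sub_apply, Matrix.transpose_apply]
    simp only [hρ]
    simp only [neg_mul, Finset.sum_mul, Finset.mul_sum, ← Finset.sum_neg_distrib,
      ← Finset.sum_sub_distrib]
    refine Finset.sum_congr rfl fun j _ => ?_
    field_simp
    ring
  rw [Finset.sum_congr rfl (fun i _ => by rw [key i] :
    ∀ i ∈ Finset.univ, pderiv' i
        (fun y => (-(G y).mulVec (fun j => pderiv' j W y)) i * Real.exp (-β * W y)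
          - (1 / (2 * β)) * ((G y + (G y)ᵀ).mulVec
              (fun j => pderiv' j (fun z => Real.exp (-β * W z)) y)) i) x
      = pderiv' i (fun y => ∑ j, ((G y)ᵀ - G y) i j / 2 * pderiv' j W y
          * Real.exp (-β * W y)) x)]
  -- Step 2: expand derivatives with the product rule
  have expand : ∀ i : Fin N,
      pderiv' i (fun y => ∑ j, ((G y)ᵀ - G y) i j / 2 * pderiv' j W y
          * Real.exp (-β * W y)) x
      = ∑ j, ((pderiv' i (fun y => ((G y)ᵀ - G y) i j / 2) x * pderiv' j W x
            + ((G x)ᵀ - G x) i j / 2 * pderiv' i (fun y => pderiv' j W y) x)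
              * Real.exp (-β * W x)
          + ((G x)ᵀ - G x) i j / 2 * pderiv' j W x
              * (-β * pderiv' i W x * Real.exp (-β * W x))) := by
    intro i
    rw [pderiv'_sum i (fun j => (((hBd i j).fun_mul (hwd j)).fun_mul hρd))]
    refine Finset.sum_congr rfl fun j _ => ?_
    rw [pderiv'_mul i ((hBd i j).fun_mul (hwd j)) hρd, pderiv'_mul i (hBd i j) (hwd j),
      pderiv'_exp hW i x]
  rw [Finset.sum_congr rfl fun i _ => expand i]
  -- Step 3: split into three double sums
  have split : ∀ i : Fin N,
      (∑ j, ((pderiv' i (fun y => ((G y)ᵀ - G y) i j / 2) x * pderiv' j W x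
            + ((G x)ᵀ - G x) i j / 2 * pderiv' i (fun y => pderiv' j W y) x)
              * Real.exp (-β * W x)
          + ((G x)ᵀ - G x) i j / 2 * pderiv' j W x
              * (-β * pderiv' i W x * Real.exp (-β * W x))))
      = (∑ j, pderiv' i (fun y => ((G y)ᵀ - G y) i j / 2) x
            * (pderiv' j W x * Real.exp (-β * W x)))
        + ((∑ j, ((G x)ᵀ - G x) i j / 2 * pderiv' i (fun y => pderiv' j W y) x
              * Real.exp (-β * W x))
          + (∑ j, ((G x)ᵀ - G x) i j / 2 * pderiv' j W x
              * (-β * pderiv' i W x * Real.exp (-β * W x)))) := by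
    intro i
    rw [← Finset.sum_add_distrib, ← Finset.sum_add_distrib]
    exact Finset.sum_congr rfl fun j _ => by ring
  rw [Finset.sum_congr rfl fun i _ => split i, Finset.sum_add_distrib,
    Finset.sum_add_distrib]
  -- term 1: divergence-free hypothesis
  have hT1 : (∑ i, ∑ j, pderiv' i (fun y => ((G y)ᵀ - G y) i j / 2) x
      * (pderiv' j W x * Real.exp (-β * W x))) = 0 := by
    rw [Finset.sum_comm]
    refine Finset.sum_eq_zero fun j _ => ?_
    rw [← Finset.sum_mul]
    have : (∑ i, pderiv' i (fun y => ((G y)ᵀ - G y) i j / 2) x) = 0 := by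
      have := hdiv j x
      simpa only [hfun] using this
    rw [this, zero_mul]
  -- term 2: antisymmetric ⬝ symmetric
  have hT2 : (∑ i, ∑ j, ((G x)ᵀ - G x) i j / 2 * pderiv' i (fun y => pderiv' j W y) x
      * Real.exp (-β * W x)) = 0 := by
    refine sum_antisymm fun i j => ?_
    rw [pderiv'_symm hW j i x]
    simp only [Matrix.sub_apply, Matrix.transpose_apply]
    ring
  -- term 3: antisymmetric ⬝ symmetric
  have hT3 : (∑ i, ∑ j, ((G x)ᵀ - G x) i j / 2 * pderiv' j W x
      * (-β * pderiv' i W x * Real.exp (-β * W x))) = 0 := by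
    refine sum_antisymm fun i j => ?_
    simp only [Matrix.sub_apply, Matrix.transpose_apply]
    ring
  rw [hT1, hT2, hT3]
  ring
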